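/- arXiv:1005.2677 — 8 statements merged into one kernel-verified Lean document; each statement's English description precedes it below -/
import Mathlib

section
/- Let A be a traceless 2×2 complex matrix, and let l, w ∈ ℂ satisfy l² = det A and w² = 2·i·l·(A₁₁ − i·l) with w ≠ 0, where A₁₁ is the (1,1)-entry of A. Define T := (i/w)·(A − i·l·σ₃)·σ₃, where σ₃ = diag(1,−1). Then det T = 1 and A·T = T·(−i·l·σ₃); that is, T diagonalizes A with T⁻¹AT = −i·l·σ₃. -/
/-!
Write `L = i l` and `σ₃ = diag(1, -1)`. By Cayley–Hamilton a traceless `A` satisfies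
`A² = -det A = L²`, and together with `σ₃² = 1` this alone gives the intertwining relation
`A (A - L σ₃) σ₃ = (A - L σ₃) σ₃ (-L σ₃)`. For the determinant, expanding
`det (A - L σ₃) = det A + 2 L A₁₁ - L² = 2 i l (A₁₁ - i l) = w²` shows that the normalisation
`i / w` makes `det T = (i / w)² · (-w²) = 1`.
-/

open Complex Matrix

theorem Matrix.sq_eq_neg_det_smul_one_of_trace_eq_zero {R : Type*} [CommRing R] [Nontrivial R]
    {A : Matrix (Fin 2) (Fin 2) R} (hA : A.trace = 0) : A ^ 2 = -A.det • 1 := by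
  have h := A.aeval_self_charpoly
  rw [charpoly_fin_two, hA] at h
  simp only [map_add, map_pow, Polynomial.aeval_X, Polynomial.aeval_C, map_zero, zero_mul,
    sub_zero, Algebra.algebraMap_eq_smul_one] at h
  rw [neg_smul]
  exact eq_neg_of_add_eq_zero_left h

theorem mul_sub_smul_mul_eq_mul_neg_smul {R M : Type*} [CommRing R] [Ring M] [Algebra R M]
    {A S : M} {L : R} (hA : A ^ 2 = L ^ 2 • 1) (hS : S ^ 2 = 1) :
    A * ((A - L • S) * S) = ((A - L • S) * S) * (-L • S) := by
  have hSS : S * S = 1 := by rw [← sq, hS]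
  calc A * ((A - L • S) * S) = A ^ 2 * S - L • A * (S * S) := by
        simp only [sq, mul_sub, sub_mul, mul_smul_comm, smul_mul_assoc, mul_assoc]
    _ = -L • (A - L • S) := by rw [hA, hSS, smul_one_mul, mul_one, smul_sub, smul_smul]; module
    _ = ((A - L • S) * S) * (-L • S) := by rw [mul_smul_comm, mul_assoc, hSS, mul_one]

theorem Matrix.det_sub_smul_diag_one_neg_one {R : Type*} [CommRing R]
    (A : Matrix (Fin 2) (Fin 2) R) (L : R) :
    (A - L • !![1, 0; 0, -1]).det = A.det + L * (A 0 0 - A 1 1) - L ^ 2 := by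
  simp only [smul_of, smul_cons, smul_eq_mul, mul_one, mul_zero, smul_empty, mul_neg, det_fin_two,
    sub_apply, of_apply, cons_val', cons_val_zero, cons_val_fin_one, cons_val_one, sub_neg_eq_add,
    sub_zero]
  ring

theorem stmt0 (A : Matrix (Fin 2) (Fin 2) ℂ) (hA : A.trace = 0)
    (l w : ℂ) (hl : l ^ 2 = A.det)
    (hw : w ^ 2 = 2 * Complex.I * l * (A 0 0 - Complex.I * l)) (hw0 : w ≠ 0) :
    let σ₃ : Matrix (Fin 2) (Fin 2) ℂ := !![1, 0; 0, -1]
    let T : Matrix (Fin 2) (Fin 2) ℂ := (Complex.I / w) • ((A - (Complex.I * l) • σ₃) * σ₃)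
    T.det = 1 ∧ A * T = T * ((-(Complex.I * l)) • σ₃) := by
  intro σ₃ T
  have hA11 : A 1 1 = -A 0 0 := by
    rw [trace_fin_two] at hA
    linear_combination hA
  have hσ₃ : σ₃ ^ 2 = 1 := by
    ext i j
    fin_cases i <;> fin_cases j <;> simp [σ₃, sq]
  have hA_sq : A ^ 2 = (Complex.I * l) ^ 2 • 1 := by
    rw [sq_eq_neg_det_smul_one_of_trace_eq_zero hA, ← hl, mul_pow, I_sq, neg_one_mul]
  constructor
  · have hdetσ₃ : σ₃.det = -1 := by simp [σ₃, det_fin_two]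
    have hdet : (A - (Complex.I * l) • σ₃).det = w ^ 2 := by
      rw [det_sub_smul_diag_one_neg_one, hA11, ← hl, hw]
      linear_combination l ^ 2 * I_sq
    rw [det_smul, det_mul, hdet, hdetσ₃, Fintype.card_fin, div_pow, I_sq]
    field_simp
  · rw [mul_smul_comm, smul_mul_assoc, mul_sub_smul_mul_eq_mul_neg_smul hA_sq hσ₃]
end

section
/- Let a, s₀⁰, s₀^∞, s₁^∞ ∈ ℂ and let G be an invertible 2×2 complex matrix. Define S₀⁰ := [[1, s₀⁰],[0,1]], S₀^∞ := [[1,0],[s₀^∞,1]], S₁^∞ := [[1, s₁^∞],[0,1]], σ₁ := [[0,1],[1,0]], σ₃ := [[1,0],[0,−1]], and E := diag(exp(−π(a − i/2)), exp(π(a − i/2))). If the semi-cyclic relation G⁻¹·S₀⁰·σ₁·G = S₀^∞·S₁^∞·σ₃·E holds, then s₀^∞·s₁^∞ = −1 − exp(−2πa) − i·s₀⁰·exp(−πa). -/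
/-!
Conjugation preserves the trace, so the semi-cyclic relation gives
`tr (S₀⁰ σ₁) = tr (S₀^∞ S₁^∞ σ₃ E)`, i.e. `s₀⁰ = E₁₁ - (1 + s₀^∞ s₁^∞) E₂₂`.
Since `E = diag(i e^{-πa}, -i e^{πa})`, solving for `s₀^∞ s₁^∞` gives the claim.
-/

open Complex Matrix
open scoped Real

namespace Matrix

variable {n R : Type*} [Fintype n] [DecidableEq n] [CommRing R]

theorem trace_nonsing_inv_mul_mul {G : Matrix n n R} (hG : IsUnit G) (A : Matrix n n R) :
    trace (G⁻¹ * A * G) = trace A := by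
  rw [trace_mul_cycle, mul_nonsing_inv G ((isUnit_iff_isUnit_det G).mp hG), one_mul]

theorem trace_upperUnipotent_mul_swap (s : R) :
    trace (!![1, s; 0, 1] * !![0, 1; 1, 0]) = s := by
  simp only [mul_fin_two, trace_fin_two_of]
  ring

theorem trace_unipotent_mul_unipotent_mul_diagonal (p q x y : R) :
    trace (!![1, 0; p, 1] * !![1, q; 0, 1] * !![1, 0; 0, -1] * !![x, 0; 0, y]) =
      x - (1 + p * q) * y := by
  simp only [mul_fin_two, trace_fin_two_of]
  ring

end Matrix

namespace Complex

theorem exp_neg_pi_mul_sub_I_div_two (a : ℂ) :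
    exp (-((π : ℂ) * (a - I / 2))) = I * exp (-((π : ℂ) * a)) := by
  rw [show -((π : ℂ) * (a - I / 2)) = π / 2 * I + -(π * a) by ring, exp_add,
    exp_pi_div_two_mul_I]

theorem exp_pi_mul_sub_I_div_two (a : ℂ) :
    exp ((π : ℂ) * (a - I / 2)) = -I * exp ((π : ℂ) * a) := by
  rw [show (π : ℂ) * (a - I / 2) = -π / 2 * I + π * a by ring, exp_add,
    exp_neg_pi_div_two_mul_I]

end Complex

theorem stmt2 (a s00 s0inf s1inf : ℂ) (G : Matrix (Fin 2) (Fin 2) ℂ)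
    (hG : IsUnit G)
    (h : G⁻¹ * !![1, s00; 0, 1] * !![0, 1; 1, 0] * G =
      !![1, 0; s0inf, 1] * !![1, s1inf; 0, 1] * !![1, 0; 0, -1] *
        !![Complex.exp (-((Real.pi : ℂ) * (a - Complex.I / 2))), 0;
           0, Complex.exp ((Real.pi : ℂ) * (a - Complex.I / 2))]) :
    s0inf * s1inf =
      -1 - Complex.exp (-(2 * (Real.pi : ℂ) * a)) -
        Complex.I * s00 * Complex.exp (-((Real.pi : ℂ) * a)) := by
  have htrace := congrArg trace h
  rw [Matrix.mul_assoc G⁻¹, trace_nonsing_inv_mul_mul hG, trace_upperUnipotent_mul_swap,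
    trace_unipotent_mul_unipotent_mul_diagonal, exp_neg_pi_mul_sub_I_div_two,
    exp_pi_mul_sub_I_div_two] at htrace
  have hinv : exp (-((π : ℂ) * a)) * exp ((π : ℂ) * a) = 1 := by
    rw [← exp_add, neg_add_cancel, exp_zero]
  have hsq : exp (-((π : ℂ) * a)) * exp (-((π : ℂ) * a)) = exp (-(2 * (π : ℂ) * a)) := by
    rw [← exp_add]; ring_nf
  linear_combination (I * exp (-((π : ℂ) * a))) * htrace - (1 + s0inf * s1inf) * hinv - hsq
    + (exp (-((π : ℂ) * a)) ^ 2 + (1 + s0inf * s1inf) * exp (-((π : ℂ) * a)) * exp ((π : ℂ) * a))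
      * I_sq
end

section
/- Let a, s₀⁰, s₀^∞, s₁^∞, g₁₁, g₁₂, g₂₁, g₂₂ ∈ ℂ with g₁₁g₂₂ − g₁₂g₂₁ = 1, and set G := [[g₁₁,g₁₂],[g₂₁,g₂₂]]. With S₀⁰ := [[1,s₀⁰],[0,1]], S₀^∞ := [[1,0],[s₀^∞,1]], S₁^∞ := [[1,s₁^∞],[0,1]], σ₁ := [[0,1],[1,0]], σ₃ := diag(1,−1), E := diag(exp(−π(a−i/2)), exp(π(a−i/2))), assume the semi-cyclic relation G⁻¹·S₀⁰·σ₁·G = S₀^∞·S₁^∞·σ₃·E. Then the following three equations of the monodromy manifold hold: (i) g₂₂g₂₁ − g₁₁g₁₂ + s₀⁰g₁₁g₂₂ = i·e^{−πa}; (ii) g₁₁² − g₂₁² − s₀⁰g₁₁g₂₁ = i·s₀^∞·e^{−πa}; (iii) g₂₂² − g₁₂² + s₀⁰g₁₂g₂₂ = i·s₁^∞·e^{πa}. -/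
open Complex Matrix

theorem Matrix.inv_fin_two_of_det_eq_one {R : Type*} [CommRing R] {a b c d : R}
    (hdet : a * d - b * c = 1) : (!![a, b; c, d])⁻¹ = !![d, -b; -c, a] := by
  rw [inv_def, det_fin_two_of, hdet, Ring.inverse_one, one_smul, adjugate_fin_two_of]

theorem Complex.exp_pi_mul_sub_I_div_two_s3 (a : ℂ) :
    exp (Real.pi * (a - I / 2)) = -I * exp (Real.pi * a) := by
  rw [show (Real.pi : ℂ) * (a - I / 2) = Real.pi * a + -Real.pi / 2 * I by ring, exp_add,
    exp_neg_pi_div_two_mul_I, mul_comm]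

theorem Complex.exp_neg_pi_mul_sub_I_div_two_s3 (a : ℂ) :
    exp (-(Real.pi * (a - I / 2))) = I * exp (-(Real.pi * a)) := by
  rw [show -((Real.pi : ℂ) * (a - I / 2)) = -(Real.pi * a) + Real.pi / 2 * I by ring, exp_add,
    exp_pi_div_two_mul_I, mul_comm]

theorem Matrix.of_fin_two_inj {α : Type*} {a b c d a' b' c' d' : α} :
    !![a, b; c, d] = !![a', b'; c', d'] ↔ a = a' ∧ b = b' ∧ c = c' ∧ d = d' := by
  simp only [EmbeddingLike.apply_eq_iff_eq, vecCons_inj, and_true, and_assoc]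

theorem stmt3 (a s00 s0inf s1inf g11 g12 g21 g22 : ℂ)
    (hdet : g11 * g22 - g12 * g21 = 1)
    (h : (!![g11, g12; g21, g22] : Matrix (Fin 2) (Fin 2) ℂ)⁻¹ * !![1, s00; 0, 1] *
        !![0, 1; 1, 0] * !![g11, g12; g21, g22] =
      !![1, 0; s0inf, 1] * !![1, s1inf; 0, 1] * !![1, 0; 0, -1] *
        !![Complex.exp (-((Real.pi : ℂ) * (a - Complex.I / 2))), 0;
           0, Complex.exp ((Real.pi : ℂ) * (a - Complex.I / 2))]) :
    g22 * g21 - g11 * g12 + s00 * g11 * g22 = Complex.I * Complex.exp (-((Real.pi : ℂ) * a)) ∧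
    g11 ^ 2 - g21 ^ 2 - s00 * g11 * g21 =
      Complex.I * s0inf * Complex.exp (-((Real.pi : ℂ) * a)) ∧
    g22 ^ 2 - g12 ^ 2 + s00 * g12 * g22 =
      Complex.I * s1inf * Complex.exp ((Real.pi : ℂ) * a) := by
  rw [inv_fin_two_of_det_eq_one hdet, exp_pi_mul_sub_I_div_two_s3,
    exp_neg_pi_mul_sub_I_div_two_s3] at h
  simp only [mul_fin_two, of_fin_two_inj] at h
  obtain ⟨h11, h12, h21, -⟩ := h
  exact ⟨by linear_combination h11, by linear_combination h21, by linear_combination h12⟩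
end

section
/- Let a, b ∈ ℂ with b ≠ 0, ε ∈ {1, −1}, τₛ ∈ ℂ \ {0}, and let u be analytic near τₛ with u(τₛ) = 0 and satisfying u·u'' = (u')² − u·u'/τ + (−8εu³ + 2ab·u)/τ + b² near τₛ (with τ ≠ 0 there). Then u''(τₛ) = (u'(τₛ) − 2ab)/τₛ. Equivalently, if u'(τₛ) = i·s·b with s ∈ {1,−1}, the second Taylor coefficient of u at τₛ equals b₂ˢ = −(b/τₛ)·(a − i·s/2). -/
/-!
At a zero of `u` the equation reads `0 = u'² + b²`, so `u'(τₛ) ≠ 0`. Differentiating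
`u · u'' = R(τ)` and evaluating at `τₛ`, the term `u · u'''` drops out and leaves
`u' u'' = R'(τₛ)`, which is linear in `u''(τₛ)` with the nonzero coefficient `u'(τₛ)`.
-/

open Complex Filter Topology

theorem HasDerivAt.of_eventuallyEq_mul_of_eq_zero {𝕜 : Type*} [NontriviallyNormedField 𝕜]
    {f g h : 𝕜 → 𝕜} {x f' : 𝕜} (hf : HasDerivAt f f' x) (hg : DifferentiableAt 𝕜 g x)
    (hfx : f x = 0) (hfg : (fun y => f y * g y) =ᶠ[𝓝 x] h) :
    HasDerivAt h (f' * g x) x := by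
  have := hf.mul hg.hasDerivAt
  rw [hfx, zero_mul, add_zero] at this
  exact this.congr_of_eventuallyEq hfg.symm

theorem hasDerivAt_painleveIII_rhs_of_eq_zero (a b ε : ℂ) {u v : ℂ → ℂ} {τs q r : ℂ}
    (hu : HasDerivAt u q τs) (hv : HasDerivAt v r τs) (hvq : v τs = q) (hz : u τs = 0)
    (hτ : τs ≠ 0) :
    HasDerivAt (fun τ => v τ ^ 2 - u τ * v τ / τ + (-8 * ε * u τ ^ 3 + 2 * a * b * u τ) / τ + b ^ 2)
      (2 * q * r - q ^ 2 / τs + 2 * a * b * q / τs) τs := by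
  have hid := hasDerivAt_id τs
  refine ((((hv.pow 2).sub ((hu.mul hv).div hid hτ)).add
    ((((hu.pow 3).const_mul (-8 * ε)).add (hu.const_mul (2 * a * b))).div hid hτ)).add_const
    (b ^ 2)).congr_deriv ?_
  simp only [Pi.add_apply, Pi.mul_apply, Pi.pow_apply, id_eq, hz, hvq, Nat.cast_ofNat,
    Nat.add_one_sub_one, pow_one, ne_eq, OfNat.ofNat_ne_zero, not_false_eq_true, zero_pow,
    zero_mul, mul_zero, add_zero, sub_zero, mul_one]
  field_simp
  ring

theorem stmt12_general (a b ε τs : ℂ) (hb : b ≠ 0) (hτ : τs ≠ 0)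
    (u : ℂ → ℂ) (hu : AnalyticAt ℂ u τs) (hz : u τs = 0)
    (heq : ∀ᶠ τ in nhds τs, τ ≠ 0 →
      u τ * deriv (deriv u) τ =
        (deriv u τ) ^ 2 - u τ * deriv u τ / τ +
          (-8 * ε * u τ ^ 3 + 2 * a * b * u τ) / τ + b ^ 2) :
    deriv (deriv u) τs = (deriv u τs - 2 * a * b) / τs ∧
      ∀ s : ℂ, (s = 1 ∨ s = -1) → deriv u τs = Complex.I * s * b →
        deriv (deriv u) τs / 2 = -(b / τs) * (a - Complex.I * s / 2) := by
  have hu' := hu.deriv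
  have heq' := (heq.and (isOpen_ne.mem_nhds hτ)).mono fun τ h => h.1 h.2
  have hq : deriv u τs ≠ 0 := by
    intro hq0
    have h := heq'.self_of_nhds
    simp only [hz, hq0, zero_mul, ne_eq, OfNat.ofNat_ne_zero, not_false_eq_true, zero_pow,
      mul_zero, zero_div, sub_self, add_zero, zero_add] at h
    exact hb (pow_eq_zero_iff two_ne_zero |>.mp h.symm)
  set q := deriv u τs
  set r := deriv (deriv u) τs
  have hL := hu.differentiableAt.hasDerivAt.of_eventuallyEq_mul_of_eq_zero
    hu'.deriv.differentiableAt hz heq'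
  have hR := hasDerivAt_painleveIII_rhs_of_eq_zero a b ε hu.differentiableAt.hasDerivAt
    hu'.differentiableAt.hasDerivAt rfl hz hτ
  have hr : r = (q - 2 * a * b) / τs := by
    have h := hL.unique hR
    field_simp at h ⊢
    exact mul_left_cancel₀ hq (by linear_combination -h)
  refine ⟨hr, fun s _ hqs => ?_⟩
  rw [hr, hqs]
  field_simp
  ring

theorem stmt12 (a b ε τs : ℂ) (hε : ε = 1 ∨ ε = -1) (hb : b ≠ 0) (hτ : τs ≠ 0)
    (u : ℂ → ℂ) (hu : AnalyticAt ℂ u τs) (hz : u τs = 0)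
    (heq : ∀ᶠ τ in nhds τs, τ ≠ 0 →
      u τ * deriv (deriv u) τ =
        (deriv u τ) ^ 2 - u τ * deriv u τ / τ +
          (-8 * ε * u τ ^ 3 + 2 * a * b * u τ) / τ + b ^ 2) :
    deriv (deriv u) τs = (deriv u τs - 2 * a * b) / τs ∧
      ∀ s : ℂ, (s = 1 ∨ s = -1) → deriv u τs = Complex.I * s * b →
        deriv (deriv u) τs / 2 = -(b / τs) * (a - Complex.I * s / 2) :=
  stmt12_general a b ε τs hb hτ u hu hz heq
end

section
/- Let a, b ∈ ℂ, ε ∈ {1, −1}, τ∞ ∈ ℂ \ {0}, and c₋₂, c₋₁ ∈ ℂ with c₋₂ ≠ 0. Suppose g is analytic on a neighborhood of τ∞ and the function u(τ) := c₋₂/(τ−τ∞)² + c₋₁/(τ−τ∞) + g(τ) satisfies, on a punctured neighborhood of τ∞ (with τ ≠ 0), the equation u·u'' = (u')² − u·u'/τ + (−8εu³ + 2ab·u)/τ + b². Then c₋₂ = −τ∞/(4ε) and c₋₁ = 0. That is, every double pole of a solution of the degenerate Painlevé III equation has principal part −τ∞/(4ε(τ−τ∞)²). -/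
/-!
Write `u = A / (τ - τ₀)²` with `A = c₂ + c₁ (τ - τ₀) + g (τ - τ₀)²` analytic at `τ₀`.
Multiplying the equation by `τ (τ - τ₀)⁶` turns it into `A² (2τ₀ + 8εA) = (τ - τ₀)² W` with `W`
continuous at `τ₀`, so `F = A² (2τ₀ + 8εA)` vanishes to second order at `τ₀`.
`F(τ₀) = c₂² (2τ₀ + 8εc₂) = 0` gives `4εc₂ = -τ₀`, and then
`F'(τ₀) = 4c₂c₁ (τ₀ + 6εc₂) = -2τ₀c₂c₁ = 0` gives `c₁ = 0`.
-/

open Filter Topology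

section Calculus

variable {𝕜 E : Type*} [NontriviallyNormedField 𝕜] [NormedAddCommGroup E] [NormedSpace 𝕜 E]

theorem HasDerivAt.div_sub_pow {f : 𝕜 → 𝕜} {f' a x : 𝕜} (hf : HasDerivAt f f' x) (hx : x ≠ a)
    (n : ℕ) :
    HasDerivAt (fun t => f t / (t - a) ^ n) ((f' * (x - a) - n * f x) / (x - a) ^ (n + 1)) x := by
  have hs : x - a ≠ 0 := sub_ne_zero.2 hx
  have hp : HasDerivAt (fun t => (t - a) ^ n) (n * (x - a) ^ (n - 1) * 1) x :=
    ((hasDerivAt_id x).sub_const a).fun_pow n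
  refine (hf.fun_div hp (pow_ne_zero n hs)).congr_deriv ?_
  rcases n with _ | n
  · simp [hs]
  · field_simp
    simp only [Nat.add_sub_cancel, Nat.cast_add, Nat.cast_one]
    ring

theorem hasDerivAt_sub_sq_smul {W : 𝕜 → E} {x : 𝕜} (hW : ContinuousAt W x) :
    HasDerivAt (fun t => (t - x) ^ 2 • W t) 0 x := by
  rw [hasDerivAt_iff_tendsto_slope]
  have hlim : Tendsto (fun t => (t - x) • W t) (𝓝 x) (𝓝 0) := by
    have : ContinuousAt (fun t => (t - x) • W t) x := by fun_prop
    simpa using this.tendsto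
  refine (hlim.mono_left nhdsWithin_le_nhds).congr' ?_
  filter_upwards [self_mem_nhdsWithin] with t ht
  have hs : t - x ≠ 0 := sub_ne_zero.2 ht
  simp [slope_def_module, smul_smul, pow_two, hs]

theorem eq_zero_and_hasDerivAt_zero_of_eventuallyEq_sub_sq_smul {F W : 𝕜 → E} {x : 𝕜}
    (hF : ContinuousAt F x) (hW : ContinuousAt W x)
    (h : F =ᶠ[𝓝[≠] x] fun t => (t - x) ^ 2 • W t) : F x = 0 ∧ HasDerivAt F 0 x := by
  have hG := hasDerivAt_sub_sq_smul hW
  have hFG := (hF.eventuallyEq_nhds_iff_eventuallyEq_nhdsNE hG.continuousAt).1 h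
  exact ⟨by simpa using hFG.eq_of_nhds, hG.congr_of_eventuallyEq hFG⟩

end Calculus

def DegeneratePIII {K : Type*} [Field K] (a b ε τ u u' u'' : K) : Prop :=
  u * u'' = u' ^ 2 - u * u' / τ + (-8 * ε * u ^ 3 + 2 * a * b * u) / τ + b ^ 2

/-- With `s = τ - τ₀`, `A₁ = A'` and `A₂ = A''`, the three values are `u, u', u''` for
`u = A / s²`, and the conclusion is the equation multiplied by `τ s⁶`. -/
theorem DegeneratePIII.clear_doublePole {K : Type*} [Field K] {a b ε τ s A A₁ A₂ : K}
    (hτ : τ ≠ 0) (hs : s ≠ 0)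
    (h : DegeneratePIII a b ε τ (A / s ^ 2) ((A₁ * s - 2 * A) / s ^ 3)
      ((A₂ * s ^ 2 - 4 * A₁ * s + 6 * A) / s ^ 4)) :
    A ^ 2 * (2 * (τ - s) + 8 * ε * A) +
      s ^ 2 * (τ * (A * A₂ - A₁ ^ 2) + A * A₁ - 2 * a * b * A * s ^ 2 - τ * b ^ 2 * s ^ 4) = 0 := by
  unfold DegeneratePIII at h
  field_simp at h
  linear_combination h

theorem DegeneratePIII.leadingCoeffs_of_doublePole {a b ε τ₀ : ℂ} {A u : ℂ → ℂ}
    (hA : AnalyticAt ℂ A τ₀) (hu : u =ᶠ[𝓝[≠] τ₀] fun t => A t / (t - τ₀) ^ 2)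
    (heq : ∀ᶠ τ in 𝓝[≠] τ₀, τ ≠ 0 →
      DegeneratePIII a b ε τ (u τ) (deriv u τ) (deriv (deriv u) τ)) :
    A τ₀ ^ 2 * (2 * τ₀ + 8 * ε * A τ₀) = 0 ∧ A τ₀ * deriv A τ₀ * (τ₀ + 6 * ε * A τ₀) = 0 := by
  have hA_near : ∀ᶠ t in 𝓝[≠] τ₀, AnalyticAt ℂ A t ∧ t ≠ τ₀ :=
    (eventually_nhdsWithin_of_eventually_nhds hA.eventually_analyticAt).and self_mem_nhdsWithin
  have hu' : deriv u =ᶠ[𝓝[≠] τ₀]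
      fun t => (deriv A t * (t - τ₀) - 2 * A t) / (t - τ₀) ^ 3 := by
    refine hu.nhdsNE_deriv.trans ?_
    filter_upwards [hA_near] with t ⟨ht, hne⟩
    simpa using (ht.differentiableAt.hasDerivAt.div_sub_pow hne 2).deriv
  have hu'' : deriv (deriv u) =ᶠ[𝓝[≠] τ₀] fun t =>
      (deriv (deriv A) t * (t - τ₀) ^ 2 - 4 * deriv A t * (t - τ₀) + 6 * A t) / (t - τ₀) ^ 4 := by
    refine hu'.nhdsNE_deriv.trans ?_
    filter_upwards [hA_near] with t ⟨ht, hne⟩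
    have hD : HasDerivAt (fun t => deriv A t * (t - τ₀) - 2 * A t)
        (deriv (deriv A) t * (t - τ₀) - deriv A t) t := by
      refine ((ht.deriv.differentiableAt.hasDerivAt.fun_mul
        ((hasDerivAt_id' t).sub_const τ₀)).fun_sub
          (ht.differentiableAt.hasDerivAt.const_mul 2)).congr_deriv (by ring)
    rw [(hD.div_sub_pow hne 3).deriv]
    push_cast
    ring
  have hτ_ne : ∀ᶠ t in 𝓝[≠] τ₀, t ≠ 0 := by
    rcases eq_or_ne τ₀ 0 with rfl | h
    exacts [self_mem_nhdsWithin, eventually_ne_nhdsWithin h]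
  have hQ : (fun t => A t ^ 2 * (2 * τ₀ + 8 * ε * A t)) =ᶠ[𝓝[≠] τ₀] fun t => (t - τ₀) ^ 2 •
      -(t * (A t * deriv (deriv A) t - deriv A t ^ 2) + A t * deriv A t
        - 2 * a * b * A t * (t - τ₀) ^ 2 - t * b ^ 2 * (t - τ₀) ^ 4) := by
    filter_upwards [hu, hu', hu'', heq, hτ_ne, self_mem_nhdsWithin] with t h0 h1 h2 he ht hne
    have := DegeneratePIII.clear_doublePole ht (sub_ne_zero.2 hne) (h0 ▸ h1 ▸ h2 ▸ he ht)
    rw [sub_sub_cancel] at this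
    rw [smul_eq_mul]
    linear_combination this
  have hA' := hA.deriv
  have hA'' := hA'.deriv
  obtain ⟨hF0, hF'⟩ := eq_zero_and_hasDerivAt_zero_of_eventuallyEq_sub_sq_smul
    (by fun_prop) (by fun_prop) hQ
  have hF := (hA.differentiableAt.hasDerivAt.fun_pow 2).fun_mul
    ((hA.differentiableAt.hasDerivAt.const_mul (8 * ε)).const_add (2 * τ₀))
  refine ⟨hF0, ?_⟩
  linear_combination hF.unique hF' / 4

theorem stmt13_general (a b ε τ₀ c₂ c₁ : ℂ) (hτ : τ₀ ≠ 0)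
    (hc : c₂ ≠ 0) (g u : ℂ → ℂ) (hg : AnalyticAt ℂ g τ₀)
    (hu : ∀ t, u t = c₂ / (t - τ₀) ^ 2 + c₁ / (t - τ₀) + g t)
    (heq : ∀ᶠ τ in nhdsWithin τ₀ {τ₀}ᶜ, τ ≠ 0 →
      u τ * deriv (deriv u) τ =
        (deriv u τ) ^ 2 - u τ * deriv u τ / τ +
          (-8 * ε * u τ ^ 3 + 2 * a * b * u τ) / τ + b ^ 2) :
    c₂ = -τ₀ / (4 * ε) ∧ c₁ = 0 := by
  set A : ℂ → ℂ := fun t => c₂ + c₁ * (t - τ₀) + g t * (t - τ₀) ^ 2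
  have huA : u =ᶠ[𝓝[≠] τ₀] fun t => A t / (t - τ₀) ^ 2 := by
    filter_upwards [self_mem_nhdsWithin] with t ht
    rw [hu]
    field_simp [sub_ne_zero.2 ht]
    ring
  have hA₁ : deriv A τ₀ = c₁ := by
    refine (((hasDerivAt_id' τ₀).sub_const τ₀).const_mul c₁ |>.const_add c₂ |>.fun_add
      (hg.differentiableAt.hasDerivAt.fun_mul
        (((hasDerivAt_id' τ₀).sub_const τ₀).fun_pow 2))).deriv.trans ?_
    simp
  obtain ⟨h₀, h₁⟩ := DegeneratePIII.leadingCoeffs_of_doublePole (by fun_prop) huA heq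
  simp only [A, sub_self, hA₁] at h₀ h₁
  have hc₂ : 4 * ε * c₂ = -τ₀ := by
    have := (mul_eq_zero.1 h₀).resolve_left (by simpa using hc)
    linear_combination this / 2
  have hε : ε ≠ 0 := by
    rintro rfl
    exact hτ (by simpa using hc₂.symm)
  refine ⟨by field_simp; linear_combination hc₂, ?_⟩
  have : c₂ * c₁ * τ₀ = 0 := by linear_combination (-2) * h₁ + 3 * c₁ * c₂ * hc₂
  simpa [hc, hτ] using this

theorem stmt13 (a b ε τ₀ c₂ c₁ : ℂ) (hε : ε = 1 ∨ ε = -1) (hτ : τ₀ ≠ 0)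
    (hc : c₂ ≠ 0) (g u : ℂ → ℂ) (hg : AnalyticAt ℂ g τ₀)
    (hu : ∀ t, u t = c₂ / (t - τ₀) ^ 2 + c₁ / (t - τ₀) + g t)
    (heq : ∀ᶠ τ in nhdsWithin τ₀ {τ₀}ᶜ, τ ≠ 0 →
      u τ * deriv (deriv u) τ =
        (deriv u τ) ^ 2 - u τ * deriv u τ / τ +
          (-8 * ε * u τ ^ 3 + 2 * a * b * u τ) / τ + b ^ 2) :
    c₂ = -τ₀ / (4 * ε) ∧ c₁ = 0 :=
  stmt13_general a b ε τ₀ c₂ c₁ hτ hc g u hg hu heq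
end

section
/- Let a, b ∈ ℂ, ε ∈ {1,−1}, τ∞ ∈ ℂ \ {0}, and let g be analytic on a neighborhood of τ∞ with g(τ∞) = a₀. Define u(τ) := −τ∞/(4ε(τ−τ∞)²) + g(τ) and, on the punctured neighborhood where u ≠ 0 and τ ≠ 0, define the Hamiltonian 𝓗(τ) := (a − i/2)·b/u(τ) + (a − i/2)²/(2τ) + τ·((u'(τ))² + b²)/(4·u(τ)²) + 4ε·u(τ). Then 𝓗(τ) − (a − i/2)²/(2τ) − 1/(τ − τ∞) extends analytically to τ∞ with value 12·ε·a₀. In particular, 𝓗 has only a simple pole at the double pole τ∞ of u, with residue 1 (the double-pole contributions of τ(u')²/(4u²) and 4εu cancel), and the constant Laurent coefficient is H₀ = 12εa₀. -/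
/-!
Write `s = τ - τ₀` and `c = -τ₀ / (4ε)`, so that `u = (c + g s²) / s²` and `u' = -2c / s³ + g'`.
The double poles of `τ u'² / (4u²)` and `4ε u` are `τ / s² = τ₀ / s² + 1 / s` and
`4εc / s² = -τ₀ / s²`: they cancel, leaving the simple pole `1 / s`. What remains is analytic
with value `-2τ₀ g(τ₀) / c + 4ε g(τ₀) = 12ε a₀` at `τ₀`, since
`(a - i/2) b / u = (a - i/2) b s² / (c + g s²)` vanishes there.
-/

open Complex Filter Topology

theorem hasDerivAt_div_sub_sq_add {c τ₀ t g' : ℂ} {g : ℂ → ℂ} (hg : HasDerivAt g g' t)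
    (ht : t ≠ τ₀) :
    HasDerivAt (fun t => c / (t - τ₀) ^ 2 + g t) (-2 * c / (t - τ₀) ^ 3 + g') t := by
  have hs : t - τ₀ ≠ 0 := sub_ne_zero.mpr ht
  have hsq : HasDerivAt (fun t => (t - τ₀) ^ 2) (2 * (t - τ₀)) t := by
    simpa using ((hasDerivAt_id t).sub_const τ₀).fun_pow 2
  refine (((hasDerivAt_const t c).fun_div hsq (pow_ne_zero 2 hs)).add hg).congr_deriv ?_
  field_simp
  ring

theorem hamiltonian_double_pole_identity {A b c k τ₀ s g g' : ℂ} (hs : s ≠ 0)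
    (hD : c + g * s ^ 2 ≠ 0) (hkc : k * c = -τ₀) :
    A * b / ((c + g * s ^ 2) / s ^ 2)
      + (τ₀ + s) * ((-2 * c / s ^ 3 + g') ^ 2 + b ^ 2)
          / (4 * ((c + g * s ^ 2) / s ^ 2) ^ 2)
      + k * ((c + g * s ^ 2) / s ^ 2) - 1 / s
    = A * b * s ^ 2 / (c + g * s ^ 2)
      + (τ₀ + s) * (-8 * c * g - 4 * c * g' * s - 4 * g ^ 2 * s ^ 2
          + (g' ^ 2 + b ^ 2) * s ^ 4) / (4 * (c + g * s ^ 2) ^ 2)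
      + k * g := by
  field_simp
  linear_combination (4 * (c + g * s ^ 2) ^ 2) * hkc

/-- The regular part of `A b / u + t (u'² + b²) / (4u²) + k u - 1 / (t - τ₀)` for
`u = c / (t - τ₀)² + g` and `k c = -τ₀`, written so that it is visibly analytic at `τ₀`. -/
noncomputable def hamiltonianRegularPart (A b c k τ₀ : ℂ) (g : ℂ → ℂ) (t : ℂ) : ℂ :=
  A * b * (t - τ₀) ^ 2 / (c + g t * (t - τ₀) ^ 2)
    + t * (-8 * c * g t - 4 * c * deriv g t * (t - τ₀) - 4 * g t ^ 2 * (t - τ₀) ^ 2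
        + (deriv g t ^ 2 + b ^ 2) * (t - τ₀) ^ 4) / (4 * (c + g t * (t - τ₀) ^ 2) ^ 2)
    + k * g t

section

variable {A b c k τ₀ : ℂ} {g : ℂ → ℂ}

theorem analyticAt_hamiltonianRegularPart (hg : AnalyticAt ℂ g τ₀) (hc : c ≠ 0) :
    AnalyticAt ℂ (hamiltonianRegularPart A b c k τ₀ g) τ₀ := by
  have hg' := hg.deriv
  unfold hamiltonianRegularPart
  fun_prop (disch := simpa using hc)

theorem hamiltonianRegularPart_self (hc : c ≠ 0) (hkc : k * c = -τ₀) :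
    hamiltonianRegularPart A b c k τ₀ g τ₀ = 3 * k * g τ₀ := by
  simp only [hamiltonianRegularPart, sub_self, zero_pow two_ne_zero, zero_pow four_ne_zero,
    mul_zero, zero_div, add_zero, sub_zero, zero_add]
  field_simp
  linear_combination (-8 * g τ₀) * hkc

theorem eventually_hamiltonian_sub_pole_eq {u : ℂ → ℂ} (hg : AnalyticAt ℂ g τ₀) (hc : c ≠ 0)
    (hkc : k * c = -τ₀) (hu : ∀ t, u t = c / (t - τ₀) ^ 2 + g t) :
    ∀ᶠ t in 𝓝[≠] τ₀, u t ≠ 0 ∧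
      A * b / u t + t * (deriv u t ^ 2 + b ^ 2) / (4 * u t ^ 2) + k * u t - 1 / (t - τ₀)
        = hamiltonianRegularPart A b c k τ₀ g t := by
  have hD : ∀ᶠ t in 𝓝 τ₀, c + g t * (t - τ₀) ^ 2 ≠ 0 :=
    ContinuousAt.eventually_ne (by fun_prop) (by simpa using hc)
  filter_upwards [nhdsWithin_le_nhds hg.eventually_analyticAt, nhdsWithin_le_nhds hD,
    self_mem_nhdsWithin] with t hgt hDt ht
  have hs : t - τ₀ ≠ 0 := sub_ne_zero.mpr ht
  have hut : u t = (c + g t * (t - τ₀) ^ 2) / (t - τ₀) ^ 2 := by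
    rw [hu]
    field_simp
  have hu't : deriv u t = -2 * c / (t - τ₀) ^ 3 + deriv g t := by
    rw [funext hu]
    exact (hasDerivAt_div_sub_sq_add hgt.differentiableAt.hasDerivAt ht).deriv
  refine ⟨hut ▸ div_ne_zero hDt (pow_ne_zero 2 hs), ?_⟩
  rw [hu't, hut, hamiltonianRegularPart]
  obtain ⟨s, rfl⟩ : ∃ s, t = τ₀ + s := ⟨t - τ₀, by ring⟩
  simp only [add_sub_cancel_left] at hs hDt ⊢
  exact hamiltonian_double_pole_identity hs hDt hkc

end

theorem stmt15 (a b ε τ₀ a₀ : ℂ) (hε : ε = 1 ∨ ε = -1) (hτ : τ₀ ≠ 0)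
    (g u H : ℂ → ℂ) (hg : AnalyticAt ℂ g τ₀) (ha₀ : g τ₀ = a₀)
    (hu : ∀ t, u t = -τ₀ / (4 * ε * (t - τ₀) ^ 2) + g t)
    (hH : ∀ t, H t = (a - Complex.I / 2) * b / u t + (a - Complex.I / 2) ^ 2 / (2 * t) +
      t * ((deriv u t) ^ 2 + b ^ 2) / (4 * (u t) ^ 2) + 4 * ε * u t) :
    ∃ h : ℂ → ℂ, AnalyticAt ℂ h τ₀ ∧ h τ₀ = 12 * ε * a₀ ∧
      ∀ᶠ τ in nhdsWithin τ₀ {τ₀}ᶜ,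
        u τ ≠ 0 ∧ H τ - (a - Complex.I / 2) ^ 2 / (2 * τ) - 1 / (τ - τ₀) = h τ := by
  have h4ε : 4 * ε ≠ 0 :=
    mul_ne_zero (by norm_num) (by rcases hε with rfl | rfl <;> norm_num)
  have hc : -τ₀ / (4 * ε) ≠ 0 := div_ne_zero (neg_ne_zero.mpr hτ) h4ε
  have hkc : 4 * ε * (-τ₀ / (4 * ε)) = -τ₀ := mul_div_cancel₀ _ h4ε
  have hu' : ∀ t, u t = -τ₀ / (4 * ε) / (t - τ₀) ^ 2 + g t := fun t => by rw [hu, div_div]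
  refine ⟨hamiltonianRegularPart (a - I / 2) b (-τ₀ / (4 * ε)) (4 * ε) τ₀ g,
    analyticAt_hamiltonianRegularPart hg hc, ?_, ?_⟩
  · rw [hamiltonianRegularPart_self hc hkc, ha₀]
    ring
  · filter_upwards [eventually_hamiltonian_sub_pole_eq (A := a - I / 2) (b := b) hg hc hkc hu']
      with t ⟨hut, hreg⟩
    refine ⟨hut, ?_⟩
    rw [hH, ← hreg]
    ring
end

section
/- Let a, b ∈ ℂ, ε ∈ {1, −1}, and let u, φ be differentiable complex-valued functions on an interval I ⊂ (0, ∞), with u nowhere zero and u twice differentiable, satisfying the system u'' = (u')²/u − u'/τ + (−8εu² + 2ab)/τ + b²/u and φ' = 2a/τ + b/u. Define A(τ) := (u/τ)·e^{iφ}, B(τ) := −(u/τ)·e^{−iφ}, C(τ) := ετ·A'/(4u), D(τ) := −ετ·B'/(4u), and S(τ) := ε·u/τ (so S² = −A·B). Then on I the system of isomonodromy deformations holds: A' = 4·C·S, B' = −4·D·S, (τC)' = 2ia·C − 2τ·A, (τD)' = −2ia·D + 2τ·B, and S' = 2·(A·D − B·C). -/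
/-!
Write `A = (u/τ)·e^{iφ}`. Differentiating, `τC = (ε/4)(τu'/u − 1 + iτφ')·e^{iφ}`, and the second
equation of (1.5) turns the bracket into `F = τu'/u − 1 + i(2a + bτ/u)`. The first equation is
exactly what makes `F` satisfy the Riccati-type identity `F' + (ib/u)·F = −8εu`, and with `ε² = 1`
this is `(τC)' = 2iaC − 2τA`. Since `(u, −φ)` solves (1.5) with `(a, b)` replaced by `(−a, −b)`,
while `B` and `D` are `−A` and `C` built from `(u, −φ)`, the equations for `B` and `D` are those for
`A` and `C`. Finally `S' = ε(u/τ)' = 2(AD − BC)` is read off from the formulas for `τC` and `τD`.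
-/

open Complex

noncomputable section

theorem hasDerivAt_ofReal (t : ℝ) : HasDerivAt (fun s : ℝ => (s : ℂ)) 1 t := by
  simpa using (hasDerivAt_id t).ofReal_comp

-- `A` of (1.6); `B` is `-isoA u (-φ)` and `D` (called `E` in the theorem) is `isoC ε u (-φ)`.
def isoA (u φ : ℝ → ℂ) (t : ℝ) : ℂ := u t / t * exp (I * φ t)

def isoC (ε : ℂ) (u φ : ℝ → ℂ) (t : ℝ) : ℂ := ε * t * deriv (isoA u φ) t / (4 * u t)

def isoS (ε : ℂ) (u : ℝ → ℂ) (t : ℝ) : ℂ := ε * u t / t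

def normalizedC (a b : ℂ) (u : ℝ → ℂ) (t : ℝ) : ℂ :=
  t * deriv u t / u t - 1 + I * (2 * a + b * t / u t)

structure IsDegPIIISolution (a b ε : ℂ) (D : Set ℝ) (u φ : ℝ → ℂ) : Prop where
  ne_zero : ∀ τ ∈ D, u τ ≠ 0
  differentiableAt : ∀ τ ∈ D, DifferentiableAt ℝ u τ
  differentiableAt_deriv : ∀ τ ∈ D, DifferentiableAt ℝ (deriv u) τ
  differentiableAt_phase : ∀ τ ∈ D, DifferentiableAt ℝ φ τ
  deriv_deriv_eq : ∀ τ ∈ D, deriv (deriv u) τ =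
      (deriv u τ) ^ 2 / u τ - deriv u τ / (τ : ℂ) +
        (-8 * ε * (u τ) ^ 2 + 2 * a * b) / (τ : ℂ) + b ^ 2 / u τ
  deriv_phase_eq : ∀ τ ∈ D, deriv φ τ = 2 * a / (τ : ℂ) + b / u τ

variable {a b ε : ℂ} {D : Set ℝ} {u φ : ℝ → ℂ} {τ : ℝ}

theorem IsDegPIIISolution.neg (h : IsDegPIIISolution a b ε D u φ) :
    IsDegPIIISolution (-a) (-b) ε D u (-φ) where
  ne_zero := h.ne_zero
  differentiableAt := h.differentiableAt
  differentiableAt_deriv := h.differentiableAt_deriv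
  differentiableAt_phase τ hτ := (h.differentiableAt_phase τ hτ).neg
  deriv_deriv_eq τ hτ := by rw [h.deriv_deriv_eq τ hτ]; ring
  deriv_phase_eq τ hτ := by rw [deriv.neg, h.deriv_phase_eq τ hτ]; ring

theorem hasDerivAt_isoA (hu : DifferentiableAt ℝ u τ) (hφ : DifferentiableAt ℝ φ τ)
    (hτ : τ ≠ 0) :
    HasDerivAt (isoA u φ)
      ((τ * deriv u τ - u τ + I * τ * u τ * deriv φ τ) / τ ^ 2 * exp (I * φ τ)) τ := by
  have hτ' : (τ : ℂ) ≠ 0 := ofReal_ne_zero.mpr hτ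
  refine ((hu.hasDerivAt.div (hasDerivAt_ofReal τ) hτ').mul
    (hφ.hasDerivAt.const_mul I).cexp).congr_deriv ?_
  rw [Pi.div_apply]
  field_simp

theorem deriv_isoA_eq_four_mul_isoC_mul_isoS (hε : ε ^ 2 = 1) (hu : u τ ≠ 0) (hτ : τ ≠ 0) :
    deriv (isoA u φ) τ = 4 * isoC ε u φ τ * isoS ε u τ := by
  have hτ' : (τ : ℂ) ≠ 0 := ofReal_ne_zero.mpr hτ
  unfold isoC isoS
  field_simp
  rw [hε, mul_one]

theorem ofReal_mul_isoC (hu : DifferentiableAt ℝ u τ) (hφ : DifferentiableAt ℝ φ τ)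
    (hu0 : u τ ≠ 0) (hτ : τ ≠ 0) :
    τ * isoC ε u φ τ = ε / 4 * (τ * deriv u τ / u τ - 1 + I * (τ * deriv φ τ)) * exp (I * φ τ) := by
  have hτ' : (τ : ℂ) ≠ 0 := ofReal_ne_zero.mpr hτ
  rw [isoC, (hasDerivAt_isoA hu hφ hτ).deriv]
  field_simp

theorem hasDerivAt_isoS (hu : DifferentiableAt ℝ u τ) (hφ : DifferentiableAt ℝ φ τ)
    (hu0 : u τ ≠ 0) (hτ : τ ≠ 0) :
    HasDerivAt (isoS ε u)
      (2 * (isoA u φ τ * isoC ε u (-φ) τ + isoA u (-φ) τ * isoC ε u φ τ)) τ := by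
  have hτ' : (τ : ℂ) ≠ 0 := ofReal_ne_zero.mpr hτ
  have hC := ofReal_mul_isoC (ε := ε) hu hφ hu0 hτ
  have hE := ofReal_mul_isoC (ε := ε) hu hφ.neg hu0 hτ
  refine ((hu.hasDerivAt.const_mul ε).div (hasDerivAt_ofReal τ) hτ').congr_deriv ?_
  rw [deriv.neg, Pi.neg_apply] at hE
  apply mul_left_cancel₀ hτ'
  calc (τ : ℂ) * ((ε * deriv u τ * τ - ε * u τ * 1) / τ ^ 2)
      = 2 * (isoA u φ τ * (τ * isoC ε u (-φ) τ) + isoA u (-φ) τ * (τ * isoC ε u φ τ)) := by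
        rw [hC, hE]
        simp only [isoA, Pi.neg_apply, mul_neg, exp_neg]
        field_simp
        ring
    _ = _ := by ring

theorem IsDegPIIISolution.hasDerivAt_normalizedC (h : IsDegPIIISolution a b ε D u φ)
    (hτD : τ ∈ D) (hτ : τ ≠ 0) :
    HasDerivAt (normalizedC a b u) (-8 * ε * u τ - I * b / u τ * normalizedC a b u τ) τ := by
  have hτ' : (τ : ℂ) ≠ 0 := ofReal_ne_zero.mpr hτ
  have hu0 := h.ne_zero τ hτD
  have hu := (h.differentiableAt τ hτD).hasDerivAt
  have hu' := (h.differentiableAt_deriv τ hτD).hasDerivAt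
  refine ((((hasDerivAt_ofReal τ).mul hu').div hu hu0).sub_const 1 |>.add
    ((((hasDerivAt_ofReal τ).const_mul b).div hu hu0).const_add (2 * a) |>.const_mul I))
    |>.congr_deriv ?_
  rw [Pi.mul_apply, h.deriv_deriv_eq τ hτD, normalizedC]
  field_simp
  linear_combination (2 * u τ * a * b + τ * b ^ 2) * I_sq

theorem IsDegPIIISolution.hasDerivAt_ofReal_mul_isoC (h : IsDegPIIISolution a b ε D u φ)
    (hD : IsOpen D) (hD0 : (0 : ℝ) ∉ D) (hε : ε ^ 2 = 1) (hτD : τ ∈ D) :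
    HasDerivAt (fun t : ℝ => t * isoC ε u φ t)
      (2 * I * a * isoC ε u φ τ - 2 * τ * isoA u φ τ) τ := by
  have hτ : τ ≠ 0 := ne_of_mem_of_not_mem hτD hD0
  have hτ' : (τ : ℂ) ≠ 0 := ofReal_ne_zero.mpr hτ
  have hu0 := h.ne_zero τ hτD
  have hC : ∀ t ∈ D, t * isoC ε u φ t = ε / 4 * normalizedC a b u t * exp (I * φ t) := by
    intro t ht
    have ht0 : t ≠ 0 := ne_of_mem_of_not_mem ht hD0
    have ht' : (t : ℂ) ≠ 0 := ofReal_ne_zero.mpr ht0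
    have hφ' : (t : ℂ) * deriv φ t = 2 * a + b * t / u t := by
      rw [h.deriv_phase_eq t ht]
      field_simp
    rw [ofReal_mul_isoC (h.differentiableAt t ht) (h.differentiableAt_phase t ht)
      (h.ne_zero t ht) ht0, hφ', normalizedC]
  have hφ := (h.differentiableAt_phase τ hτD).hasDerivAt
  refine ((((h.hasDerivAt_normalizedC hτD hτ).const_mul (ε / 4)).mul (hφ.const_mul I).cexp)
    |>.congr_of_eventuallyEq (Filter.eventuallyEq_of_mem (hD.mem_nhds hτD) hC)).congr_deriv ?_
  have hCτ : isoC ε u φ τ = ε / 4 * normalizedC a b u τ * exp (I * φ τ) / τ := by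
    rw [← hC τ hτD]; field_simp
  rw [hCτ, isoA, h.deriv_phase_eq τ hτD]
  field_simp
  linear_combination (-8 * u τ ^ 2 * τ) * hε

end

theorem stmt18 (a b ε : ℂ) (hε : ε = 1 ∨ ε = -1)
    (D : Set ℝ) (hD : IsOpen D) (hDpos : D ⊆ Set.Ioi 0)
    (u φ : ℝ → ℂ)
    (hu0 : ∀ τ ∈ D, u τ ≠ 0)
    (hud : ∀ τ ∈ D, DifferentiableAt ℝ u τ)
    (hud2 : ∀ τ ∈ D, DifferentiableAt ℝ (deriv u) τ)
    (hφd : ∀ τ ∈ D, DifferentiableAt ℝ φ τ)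
    (hueq : ∀ τ ∈ D, deriv (deriv u) τ =
      (deriv u τ) ^ 2 / u τ - deriv u τ / (τ : ℂ) +
        (-8 * ε * (u τ) ^ 2 + 2 * a * b) / (τ : ℂ) + b ^ 2 / u τ)
    (hφeq : ∀ τ ∈ D, deriv φ τ = 2 * a / (τ : ℂ) + b / u τ)
    (A B C E S : ℝ → ℂ)
    (hA : ∀ τ, A τ = (u τ / (τ : ℂ)) * Complex.exp (Complex.I * φ τ))
    (hB : ∀ τ, B τ = -(u τ / (τ : ℂ)) * Complex.exp (-(Complex.I * φ τ)))
    (hC : ∀ τ, C τ = ε * (τ : ℂ) * deriv A τ / (4 * u τ))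
    (hE : ∀ τ, E τ = -(ε * (τ : ℂ) * deriv B τ / (4 * u τ)))
    (hS : ∀ τ, S τ = ε * u τ / (τ : ℂ)) :
    ∀ τ ∈ D,
      deriv A τ = 4 * C τ * S τ ∧
      deriv B τ = -(4 * E τ * S τ) ∧
      deriv (fun t : ℝ => (t : ℂ) * C t) τ = 2 * Complex.I * a * C τ - 2 * (τ : ℂ) * A τ ∧
      deriv (fun t : ℝ => (t : ℂ) * E t) τ = -(2 * Complex.I * a * E τ) + 2 * (τ : ℂ) * B τ ∧
      deriv S τ = 2 * (A τ * E τ - B τ * C τ) := by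
  intro τ hτD
  have hD0 : (0 : ℝ) ∉ D := fun h0 => lt_irrefl 0 (Set.mem_Ioi.mp (hDpos h0))
  have hτ : τ ≠ 0 := ne_of_mem_of_not_mem hτD hD0
  have hu0τ := hu0 τ hτD
  have hε2 : ε ^ 2 = 1 := by rcases hε with rfl | rfl <;> norm_num
  have hsol : IsDegPIIISolution a b ε D u φ := ⟨hu0, hud, hud2, hφd, hueq, hφeq⟩
  obtain rfl : A = isoA u φ := funext hA
  obtain rfl : B = -isoA u (-φ) := funext fun t => by
    rw [hB, Pi.neg_apply, isoA, Pi.neg_apply, mul_neg, neg_mul]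
  obtain rfl : C = isoC ε u φ := funext hC
  obtain rfl : E = isoC ε u (-φ) := funext fun t => by
    rw [hE, deriv.neg, isoC]
    ring
  obtain rfl : S = isoS ε u := funext hS
  refine ⟨deriv_isoA_eq_four_mul_isoC_mul_isoS hε2 hu0τ hτ, ?_,
    (hsol.hasDerivAt_ofReal_mul_isoC hD hD0 hε2 hτD).deriv, ?_,
    (hasDerivAt_isoS (hud τ hτD) (hφd τ hτD) hu0τ hτ).deriv.trans ?_⟩
  · rw [deriv.neg, deriv_isoA_eq_four_mul_isoC_mul_isoS hε2 hu0τ hτ]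
  · rw [(hsol.neg.hasDerivAt_ofReal_mul_isoC hD hD0 hε2 hτD).deriv, Pi.neg_apply]
    ring
  · rw [Pi.neg_apply]
    ring
end

section
/- Let a ∈ ℂ, ε ∈ {1, −1}, and let A, B, C, D, S be differentiable complex-valued functions on an interval I ⊂ (0, ∞), with A, B, S nowhere zero, satisfying S² = −A·B and the system A' = 4CS, B' = −4DS, (τC)' = 2iaC − 2τA, (τD)' = −2iaD + 2τB, S' = 2(AD − BC). Define u := ετ·S and β(τ) := u(τ)·(w(τ) − 2a/τ), where w := −(i/2)·(A'/A − B'/B). Then β'(τ) = 0 for all τ ∈ I; i.e., β is constant on I (this constant is the parameter b of the degenerate Painlevé III equation). -/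
/-!
Since `S² = -AB`, the product `u·w = -2iετS²(AE + BC)/(AB)` equals `2iετ(AE + BC)`, so on `D`
the function `β` coincides with `2iε(A·(τE) + B·(τC)) − 2aεS`. Differentiating this expression with the given
system, the terms `A'·τE + B'·τC = 4S(CτE − EτC)` cancel, and what remains of the product rule,
`−2ia(AE − BC)` times `2iε`, cancels against `2aε S'`.
-/

open Complex Filter Topology

def betaClosedForm (a ε : ℂ) (A B C E S : ℝ → ℂ) (t : ℝ) : ℂ :=
  2 * I * ε * (A t * ((t : ℂ) * E t) + B t * ((t : ℂ) * C t)) - 2 * a * ε * S t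

theorem mul_logDeriv_sub_eq {a ε t A B C E S : ℂ} (ht : t ≠ 0) (hA : A ≠ 0) (hB : B ≠ 0)
    (hS2 : S ^ 2 = -(A * B)) :
    ε * t * S * (-(I / 2) * (4 * C * S / A - -(4 * E * S) / B) - 2 * a / t) =
      2 * I * ε * (A * (t * E) + B * (t * C)) - 2 * a * ε * S := by
  field_simp
  linear_combination (-(4 * I * ε * t * (C * B + E * A))) * hS2

theorem hasDerivAt_betaClosedForm_zero {a ε : ℂ} {A B C E S : ℝ → ℂ} {τ : ℝ}
    (hA : HasDerivAt A (4 * C τ * S τ) τ) (hB : HasDerivAt B (-(4 * E τ * S τ)) τ)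
    (hC : HasDerivAt (fun t : ℝ => (t : ℂ) * C t) (2 * I * a * C τ - 2 * τ * A τ) τ)
    (hE : HasDerivAt (fun t : ℝ => (t : ℂ) * E t) (-(2 * I * a * E τ) + 2 * τ * B τ) τ)
    (hS : HasDerivAt S (2 * (A τ * E τ - B τ * C τ)) τ) :
    HasDerivAt (betaClosedForm a ε A B C E S) 0 τ := by
  have h : HasDerivAt (betaClosedForm a ε A B C E S)
      (2 * I * ε * (4 * C τ * S τ * (τ * E τ) + A τ * (-(2 * I * a * E τ) + 2 * τ * B τ) +
          (-(4 * E τ * S τ) * (τ * C τ) + B τ * (2 * I * a * C τ - 2 * τ * A τ))) -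
        2 * a * ε * (2 * (A τ * E τ - B τ * C τ))) τ :=
    (((hA.mul hE).add (hB.mul hC)).const_mul (2 * I * ε)).sub (hS.const_mul (2 * a * ε))
  refine h.congr_deriv ?_
  linear_combination (-4 * a * ε * (A τ * E τ - B τ * C τ)) * Complex.I_sq

theorem stmt19_general (a ε : ℂ)
    (D : Set ℝ) (hD : IsOpen D) (hDpos : D ⊆ Set.Ioi 0)
    (A B C E S : ℝ → ℂ)
    (hAd : ∀ τ ∈ D, DifferentiableAt ℝ A τ)
    (hBd : ∀ τ ∈ D, DifferentiableAt ℝ B τ)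
    (hCd : ∀ τ ∈ D, DifferentiableAt ℝ C τ)
    (hEd : ∀ τ ∈ D, DifferentiableAt ℝ E τ)
    (hSd : ∀ τ ∈ D, DifferentiableAt ℝ S τ)
    (hA0 : ∀ τ ∈ D, A τ ≠ 0) (hB0 : ∀ τ ∈ D, B τ ≠ 0)
    (hS2 : ∀ τ ∈ D, S τ ^ 2 = -(A τ * B τ))
    (heqA : ∀ τ ∈ D, deriv A τ = 4 * C τ * S τ)
    (heqB : ∀ τ ∈ D, deriv B τ = -(4 * E τ * S τ))
    (heqC : ∀ τ ∈ D, deriv (fun t : ℝ => (t : ℂ) * C t) τ =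
      2 * Complex.I * a * C τ - 2 * (τ : ℂ) * A τ)
    (heqE : ∀ τ ∈ D, deriv (fun t : ℝ => (t : ℂ) * E t) τ =
      -(2 * Complex.I * a * E τ) + 2 * (τ : ℂ) * B τ)
    (heqS : ∀ τ ∈ D, deriv S τ = 2 * (A τ * E τ - B τ * C τ))
    (u w β : ℝ → ℂ)
    (hu : ∀ τ, u τ = ε * (τ : ℂ) * S τ)
    (hw : ∀ τ, w τ = -(Complex.I / 2) * (deriv A τ / A τ - deriv B τ / B τ))
    (hβ : ∀ τ, β τ = u τ * (w τ - 2 * a / (τ : ℂ))) :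
    ∀ τ ∈ D, deriv β τ = 0 := by
  intro τ hτ
  have hβ_eq : β =ᶠ[𝓝 τ] betaClosedForm a ε A B C E S := by
    filter_upwards [hD.mem_nhds hτ] with t ht
    have ht0 : (t : ℂ) ≠ 0 := ofReal_ne_zero.mpr (hDpos ht).ne'
    rw [hβ, hu, hw, heqA t ht, heqB t ht]
    exact mul_logDeriv_sub_eq ht0 (hA0 t ht) (hB0 t ht) (hS2 t ht)
  rw [hβ_eq.deriv_eq]
  have hτC : DifferentiableAt ℝ (fun t : ℝ => (t : ℂ) * C t) τ :=
    ofRealCLM.differentiableAt.mul (hCd τ hτ)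
  have hτE : DifferentiableAt ℝ (fun t : ℝ => (t : ℂ) * E t) τ :=
    ofRealCLM.differentiableAt.mul (hEd τ hτ)
  exact (hasDerivAt_betaClosedForm_zero (heqA τ hτ ▸ (hAd τ hτ).hasDerivAt)
    (heqB τ hτ ▸ (hBd τ hτ).hasDerivAt) (heqC τ hτ ▸ hτC.hasDerivAt)
    (heqE τ hτ ▸ hτE.hasDerivAt) (heqS τ hτ ▸ (hSd τ hτ).hasDerivAt)).deriv

theorem stmt19 (a ε : ℂ) (hε : ε = 1 ∨ ε = -1)
    (D : Set ℝ) (hD : IsOpen D) (hDpos : D ⊆ Set.Ioi 0)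
    (A B C E S : ℝ → ℂ)
    (hAd : ∀ τ ∈ D, DifferentiableAt ℝ A τ)
    (hBd : ∀ τ ∈ D, DifferentiableAt ℝ B τ)
    (hCd : ∀ τ ∈ D, DifferentiableAt ℝ C τ)
    (hEd : ∀ τ ∈ D, DifferentiableAt ℝ E τ)
    (hSd : ∀ τ ∈ D, DifferentiableAt ℝ S τ)
    (hA0 : ∀ τ ∈ D, A τ ≠ 0) (hB0 : ∀ τ ∈ D, B τ ≠ 0) (hS0 : ∀ τ ∈ D, S τ ≠ 0)
    (hS2 : ∀ τ ∈ D, S τ ^ 2 = -(A τ * B τ))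
    (heqA : ∀ τ ∈ D, deriv A τ = 4 * C τ * S τ)
    (heqB : ∀ τ ∈ D, deriv B τ = -(4 * E τ * S τ))
    (heqC : ∀ τ ∈ D, deriv (fun t : ℝ => (t : ℂ) * C t) τ =
      2 * Complex.I * a * C τ - 2 * (τ : ℂ) * A τ)
    (heqE : ∀ τ ∈ D, deriv (fun t : ℝ => (t : ℂ) * E t) τ =
      -(2 * Complex.I * a * E τ) + 2 * (τ : ℂ) * B τ)
    (heqS : ∀ τ ∈ D, deriv S τ = 2 * (A τ * E τ - B τ * C τ))
    (u w β : ℝ → ℂ)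
    (hu : ∀ τ, u τ = ε * (τ : ℂ) * S τ)
    (hw : ∀ τ, w τ = -(Complex.I / 2) * (deriv A τ / A τ - deriv B τ / B τ))
    (hβ : ∀ τ, β τ = u τ * (w τ - 2 * a / (τ : ℂ))) :
    ∀ τ ∈ D, deriv β τ = 0 :=
  stmt19_general a ε D hD hDpos A B C E S hAd hBd hCd hEd hSd hA0 hB0 hS2 heqA heqB heqC heqE heqS u
    w β hu hw hβ
end
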